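/- arXiv:1803.04210 — 3 statements merged into one kernel-verified Lean document; each statement's English description precedes it below -/
import Mathlib

section
/- Let H and E be finite types; for each e ∈ E fix endpoints η₁(e), η₂(e) ∈ H. For each η ∈ H let P_η be an additive commutative monoid; for each e ∈ E let N_e be an additive commutative monoid equipped with additive monoid homomorphisms χ₁ᵉ : N_e → P_{η₁(e)}, χ₂ᵉ : N_e → P_{η₂(e)}, and u_e : N_e → ℤ. Define Q^∨ to be the submonoid of (∏_{η∈H} Hom_{AddMonoid}(P_η, ℕ)) × (E → ℕ) consisting of pairs ((V_η)_η, l) such that for every e ∈ E and every p ∈ N_e one has (V_{η₂(e)}(χ₂ᵉ(p)) : ℤ) − (V_{η₁(e)}(χ₁ᵉ(p)) : ℤ) = (l e : ℤ) · u_e(p). Let E₀ := {e ∈ E | u_e = 0}, let Q̄^∨ := {((V_η)_η, l) ∈ Q^∨ | l e = 0 whenever u_e = 0}, and let Q₀^∨ := E₀ → ℕ. Then the map Q̄^∨ × Q₀^∨ → Q^∨ sending (((V_η)_η, l), m) to ((V_η)_η, l + m̃), where m̃ is the extension of m by zero to E, is an isomorphism of additive monoids. -/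
section

variable {H E : Type*} [Fintype H] [Fintype E]
  (η₁ η₂ : E → H)
  (P : H → Type*) [∀ h, AddCommMonoid (P h)]
  (N : E → Type*) [∀ e, AddCommMonoid (N e)]
  (χ₁ : ∀ e, N e →+ P (η₁ e)) (χ₂ : ∀ e, N e →+ P (η₂ e))
  (u : ∀ e, N e →+ ℤ)

/-- The dual basic monoid `Q^∨`: pairs `((V_η)_η, l)` such that for every edge `e`
and every `p ∈ N e`, `V_{η₂ e}(χ₂ᵉ p) - V_{η₁ e}(χ₁ᵉ p) = l e • u_e p`. -/
def dualBasicMonoid : AddSubmonoid ((∀ h, P h →+ ℕ) × (E → ℕ)) where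
  carrier := {x | ∀ (e : E) (p : N e),
    ((x.1 (η₂ e)) ((χ₂ e) p) : ℤ) - ((x.1 (η₁ e)) ((χ₁ e) p) : ℤ) = (x.2 e : ℤ) * (u e) p}
  zero_mem' := by intro e p; simp
  add_mem' := by
    intro a b ha hb e p
    have h1 := ha e p
    have h2 := hb e p
    simp only [Prod.fst_add, Prod.snd_add, Pi.add_apply, AddMonoidHom.add_apply] at *
    push_cast at h1 h2 ⊢
    linarith

/-- The submonoid `Q̄^∨ ⊆ Q^∨` of elements with `l e = 0` whenever `u e = 0`. -/
def dualBasicMonoidBar : AddSubmonoid ((∀ h, P h →+ ℕ) × (E → ℕ)) where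
  carrier := {x | x ∈ dualBasicMonoid η₁ η₂ P N χ₁ χ₂ u ∧ ∀ e : E, u e = 0 → x.2 e = 0}
  zero_mem' := ⟨(dualBasicMonoid η₁ η₂ P N χ₁ χ₂ u).zero_mem, by intro e _; rfl⟩
  add_mem' := by
    intro a b ha hb
    refine ⟨(dualBasicMonoid η₁ η₂ P N χ₁ χ₂ u).add_mem ha.1 hb.1, ?_⟩
    intro e he
    simp only [Prod.snd_add, Pi.add_apply, ha.2 e he, hb.2 e he]

open Classical in
/-- The map `Q̄^∨ × Q₀^∨ → Q^∨`, `(((V_η)_η, l), m) ↦ ((V_η)_η, l + m̃)` (where `m̃`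
extends `m` by zero from `E₀ = {e | u e = 0}` to `E`) is additive, injective, and
surjective onto `Q^∨`, i.e. it is an isomorphism of additive monoids
`Q̄^∨ ⊕ Q₀^∨ ≅ Q^∨`. -/
theorem dualBasicMonoid_decomposition :
    Function.Injective
      (fun x : (dualBasicMonoidBar η₁ η₂ P N χ₁ χ₂ u) × ({e : E // u e = 0} → ℕ) =>
        (((x.1 : (∀ h, P h →+ ℕ) × (E → ℕ)).1,
          (x.1 : (∀ h, P h →+ ℕ) × (E → ℕ)).2 +
            fun e => if h : u e = 0 then x.2 ⟨e, h⟩ else 0) :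
          (∀ h, P h →+ ℕ) × (E → ℕ))) ∧
    (∀ x y : (dualBasicMonoidBar η₁ η₂ P N χ₁ χ₂ u) × ({e : E // u e = 0} → ℕ),
      (((x + y).1 : (∀ h, P h →+ ℕ) × (E → ℕ)).1,
          ((x + y).1 : (∀ h, P h →+ ℕ) × (E → ℕ)).2 +
            fun e => if h : u e = 0 then (x + y).2 ⟨e, h⟩ else 0) =
        (((x.1 : (∀ h, P h →+ ℕ) × (E → ℕ)).1,
          (x.1 : (∀ h, P h →+ ℕ) × (E → ℕ)).2 +
            fun e => if h : u e = 0 then x.2 ⟨e, h⟩ else 0) +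
          ((y.1 : (∀ h, P h →+ ℕ) × (E → ℕ)).1,
          (y.1 : (∀ h, P h →+ ℕ) × (E → ℕ)).2 +
            fun e => if h : u e = 0 then y.2 ⟨e, h⟩ else 0))) ∧
    Set.range
      (fun x : (dualBasicMonoidBar η₁ η₂ P N χ₁ χ₂ u) × ({e : E // u e = 0} → ℕ) =>
        (((x.1 : (∀ h, P h →+ ℕ) × (E → ℕ)).1,
          (x.1 : (∀ h, P h →+ ℕ) × (E → ℕ)).2 +
            fun e => if h : u e = 0 then x.2 ⟨e, h⟩ else 0) :
          (∀ h, P h →+ ℕ) × (E → ℕ))) =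
      (dualBasicMonoid η₁ η₂ P N χ₁ χ₂ u : Set ((∀ h, P h →+ ℕ) × (E → ℕ))) := by
  refine ⟨?_, ?_, ?_⟩
  · rintro ⟨⟨⟨a1, a2⟩, ha⟩, am⟩ ⟨⟨⟨b1, b2⟩, hb⟩, bm⟩ h
    simp only [Prod.mk.injEq] at h
    obtain ⟨h1, h2⟩ := h
    have key : ∀ e : E, a2 e + (if h : u e = 0 then am ⟨e, h⟩ else 0)
        = b2 e + (if h : u e = 0 then bm ⟨e, h⟩ else 0) := fun e => congrFun h2 e
    have h2eq : a2 = b2 := by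
      funext e
      have := key e
      by_cases he : u e = 0
      · have h0a : a2 e = 0 := ha.2 e he
        have h0b : b2 e = 0 := hb.2 e he
        rw [h0a, h0b]
      · simpa [he] using this
    have hmeq : am = bm := by
      funext ⟨e, he⟩
      have := key e
      have h0a : a2 e = 0 := ha.2 e he
      have h0b : b2 e = 0 := hb.2 e he
      rw [h0a, h0b] at this
      simpa [he] using this
    subst h1; subst h2eq; subst hmeq; rfl
  · rintro ⟨⟨⟨a1, a2⟩, ha⟩, am⟩ ⟨⟨⟨b1, b2⟩, hb⟩, bm⟩
    refine Prod.ext rfl ?_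
    funext e
    by_cases he : u e = 0 <;>
      simp [he, AddSubmonoid.coe_add, Prod.snd_add, Pi.add_apply] <;> ring
  · ext ⟨V, l⟩
    simp only [Set.mem_range, SetLike.mem_coe]
    constructor
    · rintro ⟨⟨⟨⟨a1, a2⟩, ha⟩, am⟩, h⟩
      simp only [Prod.mk.injEq] at h
      obtain ⟨h1, h2⟩ := h
      intro e p
      have := ha.1 e p
      subst h1
      rw [← h2]
      by_cases he : u e = 0
      · have hup : (u e) p = 0 := by rw [he]; rfl
        simp [hup] at this ⊢
        omega
      · simpa [he] using this
    · intro hVl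
      refine ⟨⟨⟨⟨V, fun e => if u e = 0 then 0 else l e⟩, ⟨?_, ?_⟩⟩,
        fun e => l e.1⟩, ?_⟩
      · intro e p
        by_cases he : u e = 0
        · have hup : (u e) p = 0 := by rw [he]; rfl
          have := hVl e p
          simp [he, hup] at this ⊢
          omega
        · simpa [he] using hVl e p
      · intro e he; simp [he]
      · refine Prod.ext rfl ?_
        funext e
        by_cases he : u e = 0 <;> simp [he]

end
end

section
/- Let k be a field, n a natural number, and Q an additive submonoid of ℤⁿ (equivalently, of Fin n → ℤ). Let F be a face of Q, i.e. an additive submonoid F ≤ Q such that whenever a, b ∈ Q and a + b ∈ F, then a ∈ F and b ∈ F. Then the ideal p_F of the monoid algebra k[Q] (the AddMonoidAlgebra of k over Q) spanned as a k-vector space by the monomials x^p with p ∈ Q \ F is a prime ideal, with quotient k[Q]/p_F isomorphic to the monoid algebra k[F]. -/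
/-!
Because `F` is a face, the map sending `x^m` to `x^m` for `m ∈ F` and to `0` otherwise is
multiplicative: if `m + m' ∈ F` then already `m, m' ∈ F`. This gives a surjective `k`-algebra map
`k[Q] → k[F]` (split by the inclusion `k[F] → k[Q]`), and since the ideal spanned by monomials off
`F` consists exactly of the elements supported off `F`, it is the kernel. Finally `F` embeds in the
torsion-free group `ℤⁿ`, so it has unique sums and `k[F]` is a domain; hence the kernel is prime.
-/

namespace AddSubmonoid

variable {M : Type*} [AddMonoid M]

def IsFace (F : AddSubmonoid M) : Prop :=
  ∀ a b : M, a + b ∈ F → a ∈ F ∧ b ∈ F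

def comapSubtypeEquivOfLe {F Q : AddSubmonoid M} (hFQ : F ≤ Q) : F.comap Q.subtype ≃+ F where
  toFun a := ⟨a.1, a.2⟩
  invFun a := ⟨⟨a, hFQ a.2⟩, a.2⟩
  map_add' _ _ := rfl

end AddSubmonoid

namespace AddMonoidAlgebra

variable (k : Type*) {M : Type*} [AddCommMonoid M]

noncomputable def faceIdeal [Semiring k] (F : AddSubmonoid M) : Ideal (AddMonoidAlgebra k M) :=
  Ideal.span {x | ∃ m : M, m ∉ F ∧ x = single m 1}

variable {k} {F : AddSubmonoid M}

section CommSemiring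

variable [CommSemiring k]

open scoped Classical in
noncomputable def faceProjection (hF : F.IsFace) :
    AddMonoidAlgebra k M →ₐ[k] AddMonoidAlgebra k F :=
  lift k (AddMonoidAlgebra k F) M
    { toFun m := if h : m.toAdd ∈ F then single ⟨m.toAdd, h⟩ 1 else 0
      map_one' := by simp [one_def]; rfl
      map_mul' a b := by
        by_cases ha : a.toAdd ∈ F <;> by_cases hb : b.toAdd ∈ F
        · simp [ha, hb, F.add_mem ha hb]
        all_goals simp [ha, hb, mt (hF _ _)] }

variable (hF : F.IsFace)
include hF

theorem faceProjection_single (m : M) (r : k) [Decidable (m ∈ F)] :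
    faceProjection hF (single m r) = if h : m ∈ F then single ⟨m, h⟩ r else 0 := by
  by_cases h : m ∈ F <;> simp [faceProjection, lift_single, h]

theorem coeff_faceProjection (x : AddMonoidAlgebra k M) (a : F) :
    (faceProjection hF x).coeff a = x.coeff a := by
  classical
  induction x using induction_linear with
  | zero => simp
  | add x y hx hy => simp [hx, hy]
  | single m r =>
    by_cases h : m ∈ F
    · simp [faceProjection_single, h, Finsupp.single_apply, Subtype.ext_iff]
    · simp [faceProjection_single, h, (ne_of_mem_of_not_mem a.2 h).symm]

theorem faceProjection_mapDomain_subtype (y : AddMonoidAlgebra k F) :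
    faceProjection hF (mapDomain (↑) y) = y := by
  ext a
  rw [coeff_faceProjection, coeff_mapDomain, Finsupp.mapDomain_apply Subtype.val_injective]

theorem faceProjection_surjective : Function.Surjective (faceProjection (k := k) hF) :=
  fun y => ⟨_, faceProjection_mapDomain_subtype hF y⟩

theorem mem_faceIdeal_iff {x : AddMonoidAlgebra k M} :
    x ∈ faceIdeal k F ↔ ∀ m ∈ x.coeff.support, m ∉ F := by
  have hgen : {x | ∃ m : M, m ∉ F ∧ x = single m 1} = of' k M '' (F : Set M)ᶜ := by
    ext; simp [eq_comm]
  rw [faceIdeal, hgen, mem_ideal_span_of'_image]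
  refine forall₂_congr fun m _ => ⟨?_, fun hm => ⟨m, hm, 0, (zero_add m).symm⟩⟩
  rintro ⟨m', hm', d, rfl⟩ hm
  exact hm' (hF d m' hm).2

theorem ker_faceProjection : RingHom.ker (faceProjection (k := k) hF) = faceIdeal k F := by
  ext x
  rw [RingHom.mem_ker, mem_faceIdeal_iff hF]
  constructor
  · intro hx m hm hmF
    simp [← coeff_faceProjection hF x ⟨m, hmF⟩, hx] at hm
  · intro hx
    ext a
    rw [coeff_faceProjection]
    by_contra ha
    exact hx a (by simpa using ha) a.2

end CommSemiring

variable [CommRing k] (hF : F.IsFace)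
include hF

theorem faceIdeal_isPrime [IsDomain (AddMonoidAlgebra k F)] :
    (faceIdeal k F).IsPrime :=
  ker_faceProjection (k := k) hF ▸ RingHom.ker_isPrime (faceProjection hF)

noncomputable def quotientFaceIdealAlgEquiv :
    (AddMonoidAlgebra k M ⧸ faceIdeal k F) ≃ₐ[k] AddMonoidAlgebra k F :=
  (Ideal.quotientEquivAlgOfEq k (ker_faceProjection hF).symm).trans
    (Ideal.quotientKerAlgEquivOfSurjective (faceProjection_surjective hF))

end AddMonoidAlgebra

/-- Let `Q` be an additive submonoid of `ℤⁿ` and `F` a face of `Q` (a submonoid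
`F ≤ Q` such that `a + b ∈ F` implies `a ∈ F` and `b ∈ F` for `a, b ∈ Q`).  Then the
ideal `p_F` of the monoid algebra `k[Q]` spanned by the monomials `x^p` with
`p ∈ Q \ F` is prime, with quotient `k[Q]/p_F` isomorphic to `k[F]`. -/
theorem face_ideal_isPrime_and_quotient_iso
    {k : Type*} [Field k] {n : ℕ}
    (Q F : AddSubmonoid (Fin n → ℤ)) (hFQ : F ≤ Q)
    (hface : ∀ a b : Fin n → ℤ, a ∈ Q → b ∈ Q → a + b ∈ F → a ∈ F ∧ b ∈ F) :
    (Ideal.span {x : AddMonoidAlgebra k Q |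
        ∃ p : Q, (p : Fin n → ℤ) ∉ F ∧ x = AddMonoidAlgebra.single p 1}).IsPrime ∧
    Nonempty
      ((AddMonoidAlgebra k Q ⧸ Ideal.span {x : AddMonoidAlgebra k Q |
          ∃ p : Q, (p : Fin n → ℤ) ∉ F ∧ x = AddMonoidAlgebra.single p 1}) ≃ₐ[k]
        AddMonoidAlgebra k F) := by
  have hF : (F.comap Q.subtype).IsFace := fun a b => hface a b a.2 b.2
  have : UniqueSums (F.comap Q.subtype) :=
    .of_injective_addHom (Q.subtype.comp (F.comap Q.subtype).subtype).toAddHom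
      (Subtype.val_injective.comp Subtype.val_injective) inferInstance
  have hP : (AddMonoidAlgebra.faceIdeal k (F.comap Q.subtype)).IsPrime :=
    AddMonoidAlgebra.faceIdeal_isPrime hF
  exact ⟨hP, ⟨(AddMonoidAlgebra.quotientFaceIdealAlgEquiv hF).trans
    (AddMonoidAlgebra.domCongr k k (AddSubmonoid.comapSubtypeEquivOfLe hFQ))⟩⟩
end

section
/- Let A be a commutative local ring. Let R be the subring of the product A[[x]] × A[[y]] of two formal power-series rings over A consisting of all pairs (f, g) whose constant coefficients agree (R is isomorphic to A[[x,y]]/(xy)), with projections pr₁ : R → A[[x]], pr₂ : R → A[[y]], and let Δ : A → R be the ring homomorphism c ↦ (c, c). Given units ā ∈ A[[x]]ˣ and b̄ ∈ A[[y]]ˣ, there exist unique units a, b ∈ Rˣ such that pr₁(a) = ā, pr₂(b) = b̄, and the product a·b lies in the image of Δ. -/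
/-!
Write `a = (ā, g)` and `b = (f, b̄)`. The condition `a·b = (c, c)` says `ā·f = c = g·b̄`, so
`f = ā⁻¹·c` and `g = b̄⁻¹·c`, and the gluing conditions `f(0) = b̄(0)`, `g(0) = ā(0)` force
`c = ā(0)·b̄(0)`. Conversely, for this `c` both pairs glue, and they are units of the fiber
product because their components are units of `A⟦X⟧` with equal constant coefficients.
-/

/-- The local model of a node over `A`: the subring
`R = {(f, g) ∈ A[[x]] × A[[y]] | f(0) = g(0)} ≅ A[[x,y]]/(xy)`. -/
def nodeRing (A : Type*) [CommRing A] : Subring (PowerSeries A × PowerSeries A) where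
  carrier := {p | PowerSeries.constantCoeff (R := A) p.1 = PowerSeries.constantCoeff (R := A) p.2}
  zero_mem' := by simp
  one_mem' := by simp
  add_mem' := by intro a b ha hb; simpa using congrArg₂ (· + ·) ha hb
  neg_mem' := by intro a ha; simpa using congrArg (- ·) ha
  mul_mem' := by intro a b ha hb; simpa using congrArg₂ (· * ·) ha hb

open PowerSeries

namespace PowerSeries

variable {A : Type*} [CommRing A]

noncomputable abbrev unitsConstantCoeff : A⟦X⟧ˣ →* Aˣ :=
  Units.map (constantCoeff (R := A)).toMonoidHom

noncomputable abbrev unitsC : Aˣ →* A⟦X⟧ˣ := Units.map (C (R := A)).toMonoidHom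

@[simp]
theorem unitsConstantCoeff_unitsC (c : Aˣ) : unitsConstantCoeff (unitsC c) = c :=
  Units.ext (constantCoeff_C _)

end PowerSeries

namespace nodeRing

variable {A : Type*} [CommRing A]

theorem constantCoeff_fst_eq_snd (r : nodeRing A) :
    constantCoeff (r : A⟦X⟧ × A⟦X⟧).1 = constantCoeff (r : A⟦X⟧ × A⟦X⟧).2 :=
  r.2

theorem units_ext {a b : (nodeRing A)ˣ}
    (h₁ : ((a : nodeRing A) : A⟦X⟧ × A⟦X⟧).1 = ((b : nodeRing A) : A⟦X⟧ × A⟦X⟧).1)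
    (h₂ : ((a : nodeRing A) : A⟦X⟧ × A⟦X⟧).2 = ((b : nodeRing A) : A⟦X⟧ × A⟦X⟧).2) :
    a = b :=
  Units.ext <| Subtype.ext <| Prod.ext h₁ h₂

noncomputable def unitOfUnits (u v : A⟦X⟧ˣ) (h : unitsConstantCoeff u = unitsConstantCoeff v) :
    (nodeRing A)ˣ where
  val := ⟨((u : A⟦X⟧), (v : A⟦X⟧)), by exact congrArg Units.val h⟩
  inv := ⟨((u⁻¹ : A⟦X⟧ˣ), (v⁻¹ : A⟦X⟧ˣ)), by
    exact congrArg (fun w : Aˣ => ((w⁻¹ : Aˣ) : A)) h⟩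
  val_inv := Subtype.ext <| Prod.ext u.mul_inv v.mul_inv
  inv_val := Subtype.ext <| Prod.ext u.inv_mul v.inv_mul

@[simp]
theorem val_unitOfUnits (u v : A⟦X⟧ˣ) (h : unitsConstantCoeff u = unitsConstantCoeff v) :
    ((unitOfUnits u v h : nodeRing A) : A⟦X⟧ × A⟦X⟧) = ((u : A⟦X⟧), (v : A⟦X⟧)) :=
  rfl

theorem eq_mul_constantCoeff_of_mul_eq_diag {r s : nodeRing A} {c : A}
    (h : ((r * s : nodeRing A) : A⟦X⟧ × A⟦X⟧) = (C c, C c)) :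
    c = constantCoeff (r : A⟦X⟧ × A⟦X⟧).1 * constantCoeff (s : A⟦X⟧ × A⟦X⟧).2 := by
  have h₁ := congrArg (constantCoeff ∘ Prod.fst) h
  simp only [Function.comp_apply, Subring.coe_mul, Prod.fst_mul, map_mul, constantCoeff_C] at h₁
  rw [← h₁, constantCoeff_fst_eq_snd s]

noncomputable def unitLifts (abar bbar : A⟦X⟧ˣ) : (nodeRing A)ˣ × (nodeRing A)ˣ :=
  let c := unitsConstantCoeff abar * unitsConstantCoeff bbar
  (unitOfUnits abar (bbar⁻¹ * unitsC c) (by simp [c]),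
    unitOfUnits (abar⁻¹ * unitsC c) bbar (by simp [c]))

theorem unitLifts_mul (abar bbar : A⟦X⟧ˣ) :
    ((((unitLifts abar bbar).1 * (unitLifts abar bbar).2 : (nodeRing A)ˣ) : nodeRing A) :
      A⟦X⟧ × A⟦X⟧) =
      (C (constantCoeff (abar : A⟦X⟧) * constantCoeff (bbar : A⟦X⟧)),
        C (constantCoeff (abar : A⟦X⟧) * constantCoeff (bbar : A⟦X⟧))) := by
  simp [unitLifts, mul_comm _ (bbar : A⟦X⟧)]

theorem eq_unitLifts {abar bbar : A⟦X⟧ˣ} {p : (nodeRing A)ˣ × (nodeRing A)ˣ} {c : A}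
    (h₁ : ((p.1 : nodeRing A) : A⟦X⟧ × A⟦X⟧).1 = abar)
    (h₂ : ((p.2 : nodeRing A) : A⟦X⟧ × A⟦X⟧).2 = bbar)
    (h : (((p.1 * p.2 : (nodeRing A)ˣ) : nodeRing A) : A⟦X⟧ × A⟦X⟧) = (C c, C c)) :
    p = unitLifts abar bbar := by
  have hc : c = constantCoeff (abar : A⟦X⟧) * constantCoeff (bbar : A⟦X⟧) := by
    rw [← h₁, ← h₂]
    exact eq_mul_constantCoeff_of_mul_eq_diag h
  have hfst : abar * ((p.2 : nodeRing A) : A⟦X⟧ × A⟦X⟧).1 = C c := h₁ ▸ congrArg Prod.fst h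
  have hsnd : ((p.1 : nodeRing A) : A⟦X⟧ × A⟦X⟧).2 * bbar = C c := h₂ ▸ congrArg Prod.snd h
  refine Prod.ext (units_ext ?_ ?_) (units_ext ?_ ?_)
  · exact h₁
  · rw [(Units.eq_mul_inv_iff_mul_eq bbar).2 hsnd, mul_comm, hc]
    simp [unitLifts]
  · rw [(Units.eq_inv_mul_iff_mul_eq abar).2 hfst, hc]
    simp [unitLifts]
  · exact h₂

end nodeRing

theorem node_unique_unit_lifts_general
    {A : Type*} [CommRing A]
    (abar : (PowerSeries A)ˣ) (bbar : (PowerSeries A)ˣ) :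
    ∃! p : (nodeRing A)ˣ × (nodeRing A)ˣ,
      (((p.1 : nodeRing A) : PowerSeries A × PowerSeries A)).1 = (abar : PowerSeries A) ∧
      (((p.2 : nodeRing A) : PowerSeries A × PowerSeries A)).2 = (bbar : PowerSeries A) ∧
      ∃ c : A, (((p.1 * p.2 : (nodeRing A)ˣ) : nodeRing A) : PowerSeries A × PowerSeries A) =
        (PowerSeries.C (R := A) c, PowerSeries.C (R := A) c) :=
  ⟨nodeRing.unitLifts abar bbar, ⟨rfl, rfl, _, nodeRing.unitLifts_mul abar bbar⟩,
    fun _ ⟨h₁, h₂, _, h⟩ => nodeRing.eq_unitLifts h₁ h₂ h⟩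

/-- Let `A` be a commutative local ring and `R = A[[x]] ×_A A[[y]]` the subring of
pairs of power series with equal constant coefficient.  Given units `ā ∈ A[[x]]ˣ` and
`b̄ ∈ A[[y]]ˣ`, there exist unique units `a, b ∈ Rˣ` with `pr₁ a = ā`, `pr₂ b = b̄`
and `a·b` in the image of the diagonal `Δ : A → R`, `c ↦ (c, c)`. -/
theorem node_unique_unit_lifts
    {A : Type*} [CommRing A] [IsLocalRing A]
    (abar : (PowerSeries A)ˣ) (bbar : (PowerSeries A)ˣ) :
    ∃! p : (nodeRing A)ˣ × (nodeRing A)ˣ,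
      (((p.1 : nodeRing A) : PowerSeries A × PowerSeries A)).1 = (abar : PowerSeries A) ∧
      (((p.2 : nodeRing A) : PowerSeries A × PowerSeries A)).2 = (bbar : PowerSeries A) ∧
      ∃ c : A, (((p.1 * p.2 : (nodeRing A)ˣ) : nodeRing A) : PowerSeries A × PowerSeries A) =
        (PowerSeries.C (R := A) c, PowerSeries.C (R := A) c) :=
  node_unique_unit_lifts_general abar bbar
end
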